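/- arXiv:1904.04938 — 7 statements merged into one kernel-verified Lean document; each statement's English description precedes it below -/
import Mathlib

section
/- Fix T > 0 and let ψ = (ψ_i)_{i ≥ 1} be a sequence of càdlàg paths ψ_i : [0,T] → ℝ with ψ_i(0) ≤ 1 for every i. Then there exists a solution (φ, η) of the infinite-dimensional Skorokhod problem for ψ associated with the reflection matrix R_∞. -/
open Set Filter MeasureTheory Topology

/-- A path `ψ : [0,T] → ℝ` is càdlàg: right-continuous on `[0,T)` (within the domain `[0,T]`)
and has left limits (within the domain) at every point of `(0,T]`. -/
def CadlagOn (T : ℝ) (ψ : ℝ → ℝ) : Prop :=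
  (∀ t ∈ Ico (0 : ℝ) T, ContinuousWithinAt ψ (Icc t T) t) ∧
  (∀ t ∈ Ioc (0 : ℝ) T, ∃ l : ℝ, Tendsto ψ (nhdsWithin t (Ico 0 t)) (nhds l))

/-- The Lebesgue–Stieltjes measure on `[0,T]` induced by `η` assigns zero mass to the set `A`.
It is encoded via the (unique) Stieltjes function on `ℝ` obtained by extending `η` from `[0,T]`
to `ℝ` constantly to the left of `0` and to the right of `T`. -/
def ZeroMassOn (T : ℝ) (η : ℝ → ℝ) (A : Set ℝ) : Prop :=
  ∃ f : StieltjesFunction ℝ, (∀ t : ℝ, f t = η (max 0 (min t T))) ∧ f.measure A = 0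

/-- `(φ, η)` solves the infinite-dimensional Skorokhod problem on `[0,T]` for `ψ`, associated
with the reflection matrix `R_∞`.  Components are indexed by `ℕ`, where Lean index `i`
corresponds to the paper's coordinate `i + 1` (so `φ 0` is the paper's `φ_1`, etc.), and the
paper's `η_0 ≡ 0` is built into the equation for the first coordinate. -/
def SolvesSPInf (T : ℝ) (ψ φ η : ℕ → ℝ → ℝ) : Prop :=
  (∀ t ∈ Set.Icc (0 : ℝ) T, φ 0 t = ψ 0 t - η 0 t) ∧
  (∀ i : ℕ, ∀ t ∈ Set.Icc (0 : ℝ) T, φ (i + 1) t = ψ (i + 1) t + η i t - η (i + 1) t) ∧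
  (∀ i : ℕ, ∀ t ∈ Set.Icc (0 : ℝ) T, φ i t ≤ 1) ∧
  (∀ i : ℕ, η i 0 = 0 ∧ MonotoneOn (η i) (Set.Icc 0 T) ∧
    (∀ t ∈ Set.Icc (0 : ℝ) T, ContinuousWithinAt (η i) (Set.Icc t T) t) ∧
    ZeroMassOn T (η i) {t ∈ Set.Icc (0 : ℝ) T | φ i t < 1})

/-!
Since `R_∞` is lower bidiagonal, the problem can be solved one coordinate at a time: coordinate `i`
is the one-dimensional Skorokhod problem with barrier `1` for the input `ψ_i + η_{i-1}`, where
`η_{i-1}` is already known. That problem is solved by the explicit regulator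
`η(t) = sup_{0 ≤ s ≤ t ∧ T} (x(s) - 1)⁺`, which is nondecreasing and right-continuous, hence
càdlàg, so the next input is càdlàg again. At a time where `x - η < 1` the regulator neither jumps
nor increases immediately afterwards, so each such time has a right-neighbourhood of zero
Lebesgue–Stieltjes mass; by second countability the whole set of such times then has zero mass.
-/

open Function

theorem IsCompact.bddAbove_image_of_eventually_le {X β : Type*} [TopologicalSpace X]
    [SemilatticeSup β] [Nonempty β] {f : X → β} {K : Set X} (hK : IsCompact K)
    (hf : ∀ y ∈ K, ∃ M, ∀ᶠ s in 𝓝[K] y, f s ≤ M) : BddAbove (f '' K) := by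
  refine hK.induction_on (p := fun s => BddAbove (f '' s)) (by simp)
    (fun s t hst ht => ht.mono (image_mono hst))
    (fun s t hs ht => by rw [image_union]; exact hs.union ht) fun y hy => ?_
  obtain ⟨M, hM⟩ := hf y hy
  exact ⟨_, hM, M, by rintro _ ⟨s, hs, rfl⟩; exact hs⟩

theorem CadlagOn.bddAbove {T : ℝ} {ψ : ℝ → ℝ} (hψ : CadlagOn T ψ) :
    BddAbove (ψ '' Icc 0 T) := by
  refine isCompact_Icc.bddAbove_image_of_eventually_le fun y hy => ?_
  have right : ∃ M, ∀ᶠ s in 𝓝[Icc y T] y, ψ s ≤ M := by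
    rcases hy.2.lt_or_eq with hyT | rfl
    · exact ⟨_, ((hψ.1 y ⟨hy.1, hyT⟩).eventually_lt_const (lt_add_one _)).mono fun _ => le_of_lt⟩
    · exact ⟨ψ y, by filter_upwards [self_mem_nhdsWithin] with s hs; rw [hs.1.antisymm hs.2]⟩
  have left : ∃ M, ∀ᶠ s in 𝓝[Ico 0 y] y, ψ s ≤ M := by
    rcases hy.1.lt_or_eq with hy0 | rfl
    · obtain ⟨l, hl⟩ := hψ.2 y ⟨hy0, hy.2⟩
      exact ⟨_, (hl.eventually_lt_const (lt_add_one l)).mono fun _ => le_of_lt⟩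
    · exact ⟨0, by simp⟩
  obtain ⟨M₁, hM₁⟩ := right
  obtain ⟨M₂, hM₂⟩ := left
  refine ⟨max M₁ M₂, ?_⟩
  rw [← Ico_union_Icc_eq_Icc hy.1 hy.2, nhdsWithin_union]
  exact ⟨hM₂.mono fun _ h => h.trans (le_max_right _ _),
    hM₁.mono fun _ h => h.trans (le_max_left _ _)⟩

theorem CadlagOn.add {T : ℝ} {f g : ℝ → ℝ} (hf : CadlagOn T f) (hg : CadlagOn T g) :
    CadlagOn T (f + g) := by
  refine ⟨fun t ht => (hf.1 t ht).add (hg.1 t ht), fun t ht => ?_⟩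
  obtain ⟨l₁, hl₁⟩ := hf.2 t ht
  obtain ⟨l₂, hl₂⟩ := hg.2 t ht
  exact ⟨l₁ + l₂, hl₁.add hl₂⟩

theorem Monotone.cadlagOn {T : ℝ} {f : ℝ → ℝ} (hf : Monotone f)
    (hrc : ∀ t, ContinuousWithinAt f (Ici t) t) : CadlagOn T f :=
  ⟨fun t _ => (hrc t).mono Icc_subset_Ici_self,
    fun t _ => ⟨_, (hf.tendsto_nhdsLT t).mono_left (nhdsWithin_mono t Ico_subset_Iio_self)⟩⟩

theorem measure_null_of_locally_null_right {α : Type*} [TopologicalSpace α] [LinearOrder α]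
    [OrderTopology α] [SecondCountableTopology α] [MeasurableSpace α] (μ : Measure α) (s : Set α)
    (hs : ∀ x ∈ s, ∃ u ∈ 𝓝[≥] x, μ u = 0) : μ s = 0 := by
  choose! u hu hu0 using hs
  set W := ⋃ x ∈ s, interior (u x)
  have hW : μ W = 0 := by
    obtain ⟨c, hcs, hc, hcW⟩ := TopologicalSpace.isOpen_biUnion_countable s
      (fun x => interior (u x)) fun _ _ => isOpen_interior
    change μ (⋃ x ∈ s, interior (u x)) = 0
    rw [← hcW, measure_biUnion_null_iff hc]
    exact fun x hx => measure_mono_null interior_subset (hu0 x (hcs hx))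
  -- every point of `s \ W` is isolated from the right in `s \ W`, since `(x, x + ε) ⊆ W`
  have hsW : (s \ W).Countable := by
    refine (countable_setOfPred_isolated_right_within (s := s \ W)).mono fun x hx => ?_
    refine ⟨hx, ?_⟩
    obtain ⟨o, ho, hxo, hou⟩ :=
      mem_nhdsWithin.1 (nhdsWithin_mono x Ioi_subset_Ici_self (hu x hx.1))
    have hoW : o ∩ Ioi x ⊆ W := fun y hy =>
      mem_biUnion hx.1 (interior_maximal hou (ho.inter isOpen_Ioi) hy)
    exact empty_mem_iff_bot.1
      (mem_nhdsWithin.2 ⟨o, ho, hxo, by rintro y ⟨hyo, hys, hyx⟩; exact hys.2 (hoW ⟨hyo, hyx⟩)⟩)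
  have hsW0 : μ (s \ W) = 0 := by
    rw [← biUnion_of_singleton (s \ W), measure_biUnion_null_iff hsW]
    exact fun x hx => measure_mono_null
      (singleton_subset_iff.2 (mem_of_mem_nhdsWithin self_mem_Ici (hu x hx.1))) (hu0 x hx.1)
  exact measure_mono_null (fun x hx => (em (x ∈ W)).imp id (mem_sdiff_of_mem hx))
    (measure_union_null hW hsW0)

theorem StieltjesFunction.measure_null_of_flat_right (f : StieltjesFunction ℝ) (s : Set ℝ)
    (hs : ∀ x ∈ s, leftLim f x = f x ∧ ∀ᶠ y in 𝓝[≥] x, f y = f x) : f.measure s = 0 := by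
  refine measure_null_of_locally_null_right f.measure s fun x hx => ?_
  obtain ⟨hleft, hflat⟩ := hs x hx
  obtain ⟨y, hxy, hIco⟩ := mem_nhdsGE_iff_exists_Ico_subset.1 hflat
  have hright : leftLim f y = f x := leftLim_eq_of_tendsto <| tendsto_const_nhds.congr' <| by
    filter_upwards [Ioo_mem_nhdsLT hxy] with z hz using (hIco ⟨hz.1.le, hz.2⟩).symm
  exact ⟨Ico x y, Ico_mem_nhdsGE hxy, by
    rw [f.measure_Ico, hleft, hright, sub_self, ENNReal.ofReal_zero]⟩

noncomputable def skorokhodRegulator (T : ℝ) (x : ℝ → ℝ) (t : ℝ) : ℝ :=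
  sSup (insert 0 ((fun s => x s - 1) '' Icc 0 (min t T)))

/-- The one-dimensional Skorokhod problem for `x` with barrier `1`; the reflected path is
`x - η`. -/
structure SolvesSP1 (T : ℝ) (x η : ℝ → ℝ) : Prop where
  zero : η 0 = 0
  monotone : Monotone η
  rightContinuous : ∀ t, ContinuousWithinAt η (Ici t) t
  sub_le_one : ∀ t ∈ Icc 0 T, x t - η t ≤ 1
  zeroMassOn : ZeroMassOn T η {t ∈ Icc 0 T | x t - η t < 1}

section SkorokhodRegulator

variable {T : ℝ} {x : ℝ → ℝ}

theorem skorokhodRegulator_le {t b : ℝ} (hb : 0 ≤ b) (hxb : ∀ s ∈ Icc 0 (min t T), x s - 1 ≤ b) :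
    skorokhodRegulator T x t ≤ b :=
  csSup_le (insert_nonempty _ _) (by rintro _ (rfl | ⟨s, hs, rfl⟩); exacts [hb, hxb s hs])

theorem skorokhodRegulator_of_neg {t : ℝ} (ht : t < 0) : skorokhodRegulator T x t = 0 := by
  rw [skorokhodRegulator, Icc_eq_empty_of_lt (min_lt_of_left_lt ht), image_empty,
    insert_empty_eq, csSup_singleton]

theorem skorokhodRegulator_of_le {t : ℝ} (ht : T ≤ t) :
    skorokhodRegulator T x t = skorokhodRegulator T x T := by
  simp only [skorokhodRegulator, min_eq_right ht, min_self]

theorem skorokhodRegulator_min (t : ℝ) :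
    skorokhodRegulator T x (min t T) = skorokhodRegulator T x t := by
  simp only [skorokhodRegulator, min_assoc, min_self]

variable (hx : BddAbove (x '' Icc 0 T))
include hx

theorem bddAbove_skorokhodRegulator_set (t : ℝ) :
    BddAbove (insert 0 ((fun s => x s - 1) '' Icc 0 (min t T))) := by
  obtain ⟨M, hM⟩ := hx
  refine ⟨max 0 (M - 1), ?_⟩
  rintro _ (rfl | ⟨s, hs, rfl⟩)
  · exact le_max_left _ _
  · exact le_max_of_le_right
      (sub_le_sub_right (hM ⟨s, ⟨hs.1, hs.2.trans (min_le_right _ _)⟩, rfl⟩) 1)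

theorem skorokhodRegulator_nonneg (t : ℝ) : 0 ≤ skorokhodRegulator T x t :=
  le_csSup (bddAbove_skorokhodRegulator_set hx t) (mem_insert _ _)

theorem le_skorokhodRegulator {s t : ℝ} (hs : s ∈ Icc 0 (min t T)) :
    x s - 1 ≤ skorokhodRegulator T x t :=
  le_csSup (bddAbove_skorokhodRegulator_set hx t) (mem_insert_of_mem _ (mem_image_of_mem _ hs))

theorem sub_skorokhodRegulator_le_one {t : ℝ} (ht : t ∈ Icc 0 T) :
    x t - skorokhodRegulator T x t ≤ 1 := by
  linarith [le_skorokhodRegulator hx ⟨ht.1, le_min le_rfl ht.2⟩]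

theorem skorokhodRegulator_monotone : Monotone (skorokhodRegulator T x) := fun _ t hst =>
  skorokhodRegulator_le (skorokhodRegulator_nonneg hx t) fun _ hu =>
    le_skorokhodRegulator hx ⟨hu.1, hu.2.trans (min_le_min_right T hst)⟩

theorem skorokhodRegulator_zero (hx0 : x 0 ≤ 1) : skorokhodRegulator T x 0 = 0 := by
  refine le_antisymm (skorokhodRegulator_le le_rfl fun s hs => ?_) (skorokhodRegulator_nonneg hx 0)
  rw [le_antisymm (hs.2.trans (min_le_left _ _)) hs.1]
  linarith

theorem skorokhodRegulator_max_zero (hx0 : x 0 ≤ 1) (t : ℝ) :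
    skorokhodRegulator T x (max 0 t) = skorokhodRegulator T x t := by
  rcases lt_or_ge t 0 with ht | ht
  · rw [max_eq_left ht.le, skorokhodRegulator_zero hx hx0, skorokhodRegulator_of_neg ht]
  · rw [max_eq_right ht]

theorem eventually_skorokhodRegulator_le {t b : ℝ} (ht : t ∈ Ico 0 T)
    (hrc : ContinuousWithinAt x (Icc t T) t) (hb : skorokhodRegulator T x t ≤ b)
    (hxb : x t - 1 < b) : ∀ᶠ s in 𝓝[≥] t, skorokhodRegulator T x s ≤ b := by
  rw [ContinuousWithinAt, nhdsWithin_Icc_eq_nhdsGE ht.2] at hrc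
  obtain ⟨u, htu, hu⟩ := mem_nhdsGE_iff_exists_Ico_subset.1 (hrc.eventually_lt_const
    (show x t < b + 1 by linarith))
  filter_upwards [Ico_mem_nhdsGE htu] with s hs
  refine skorokhodRegulator_le ((skorokhodRegulator_nonneg hx t).trans hb) fun r hr => ?_
  rcases le_or_gt r t with hrt | htr
  · exact (le_skorokhodRegulator hx ⟨hr.1, le_min hrt (hrt.trans ht.2.le)⟩).trans hb
  · have : x r < b + 1 := hu ⟨htr.le, (hr.2.trans (min_le_left _ _)).trans_lt hs.2⟩
    linarith

theorem skorokhodRegulator_continuousWithinAt_Ici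
    (hrc : ∀ t ∈ Ico 0 T, ContinuousWithinAt x (Icc t T) t) (t : ℝ) :
    ContinuousWithinAt (skorokhodRegulator T x) (Ici t) t := by
  rcases lt_or_ge t 0 with ht0 | ht0
  · refine (continuousAt_const.congr (f := fun _ => 0) ?_).continuousWithinAt
    filter_upwards [Iio_mem_nhds ht0] with s hs using (skorokhodRegulator_of_neg hs).symm
  rcases lt_or_ge t T with htT | hTt
  · rw [ContinuousWithinAt, tendsto_order]
    refine ⟨fun a ha => ?_, fun b hb => ?_⟩
    · filter_upwards [self_mem_nhdsWithin] with s hs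
      exact ha.trans_le (skorokhodRegulator_monotone hx hs)
    · obtain ⟨c, htc, hcb⟩ := exists_between hb
      have hxc : x t - 1 < c := by linarith [sub_skorokhodRegulator_le_one hx ⟨ht0, htT.le⟩]
      filter_upwards [eventually_skorokhodRegulator_le hx ⟨ht0, htT⟩ (hrc t ⟨ht0, htT⟩) htc.le hxc]
        with s hs using hs.trans_lt hcb
  · exact continuousWithinAt_const.congr (fun s hs => skorokhodRegulator_of_le (hTt.trans hs))
      (skorokhodRegulator_of_le hTt)

/-- This is why the regulator cannot jump at a time where `x - η < 1`. -/
theorem skorokhodRegulator_le_max_leftLim (t : ℝ) :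
    skorokhodRegulator T x t ≤ max (leftLim (skorokhodRegulator T x) t) (x t - 1) := by
  have hmono := skorokhodRegulator_monotone hx
  refine skorokhodRegulator_le ?_ fun s hs => ?_
  · exact le_max_of_le_left
      ((skorokhodRegulator_nonneg hx (t - 1)).trans (hmono.le_leftLim (sub_one_lt t)))
  rcases (hs.2.trans (min_le_left _ _)).lt_or_eq with hst | rfl
  · exact le_max_of_le_left ((le_skorokhodRegulator hx ⟨hs.1, le_min le_rfl
      (hs.2.trans (min_le_right _ _))⟩).trans (hmono.le_leftLim hst))
  · exact le_max_right _ _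

theorem leftLim_skorokhodRegulator {t : ℝ} (ht : x t - skorokhodRegulator T x t < 1) :
    leftLim (skorokhodRegulator T x) t = skorokhodRegulator T x t :=
  le_antisymm ((skorokhodRegulator_monotone hx).leftLim_le le_rfl)
    ((le_max_iff.1 (skorokhodRegulator_le_max_leftLim hx t)).resolve_right (not_le.2 (by linarith)))

theorem eventually_skorokhodRegulator_eq {t : ℝ} (ht : t ∈ Icc 0 T)
    (hrc : ∀ t ∈ Ico 0 T, ContinuousWithinAt x (Icc t T) t)
    (hxt : x t - skorokhodRegulator T x t < 1) :
    ∀ᶠ s in 𝓝[≥] t, skorokhodRegulator T x s = skorokhodRegulator T x t := by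
  rcases ht.2.lt_or_eq with htT | rfl
  · filter_upwards [eventually_skorokhodRegulator_le hx ⟨ht.1, htT⟩ (hrc t ⟨ht.1, htT⟩) le_rfl
      (by linarith), self_mem_nhdsWithin] with s hle hts
    exact hle.antisymm (skorokhodRegulator_monotone hx hts)
  · filter_upwards [self_mem_nhdsWithin] with s hs using skorokhodRegulator_of_le hs

end SkorokhodRegulator

theorem skorokhodRegulator_solvesSP1 {T : ℝ} {x : ℝ → ℝ} (hx : CadlagOn T x) (hx0 : x 0 ≤ 1) :
    SolvesSP1 T x (skorokhodRegulator T x) := by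
  have hbdd := hx.bddAbove
  have hrc := skorokhodRegulator_continuousWithinAt_Ici hbdd hx.1
  let f : StieltjesFunction ℝ := ⟨_, skorokhodRegulator_monotone hbdd, hrc⟩
  refine ⟨skorokhodRegulator_zero hbdd hx0, skorokhodRegulator_monotone hbdd, hrc,
    fun t ht => sub_skorokhodRegulator_le_one hbdd ht, f, fun t => ?_,
    f.measure_null_of_flat_right _ fun t ht => ⟨leftLim_skorokhodRegulator hbdd ht.2,
      eventually_skorokhodRegulator_eq hbdd ht.1 hx.1 ht.2⟩⟩
  rw [skorokhodRegulator_max_zero hbdd hx0, skorokhodRegulator_min]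

noncomputable def skorokhodNetInput (T : ℝ) (ψ : ℕ → ℝ → ℝ) : ℕ → ℝ → ℝ
  | 0 => ψ 0
  | i + 1 => ψ (i + 1) + skorokhodRegulator T (skorokhodNetInput T ψ i)

theorem cadlagOn_skorokhodNetInput {T : ℝ} {ψ : ℕ → ℝ → ℝ} (hcad : ∀ i, CadlagOn T (ψ i))
    (hψ0 : ∀ i, ψ i 0 ≤ 1) (i : ℕ) :
    CadlagOn T (skorokhodNetInput T ψ i) ∧ skorokhodNetInput T ψ i 0 ≤ 1 := by
  induction i with
  | zero => exact ⟨hcad 0, hψ0 0⟩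
  | succ i ih =>
    have hsol := skorokhodRegulator_solvesSP1 ih.1 ih.2
    refine ⟨(hcad (i + 1)).add (hsol.monotone.cadlagOn hsol.rightContinuous), ?_⟩
    simpa [skorokhodNetInput, hsol.zero] using hψ0 (i + 1)

theorem skorokhod_inf_dim_existence_general (T : ℝ) (ψ : ℕ → ℝ → ℝ)
    (hcad : ∀ i : ℕ, CadlagOn T (ψ i)) (hψ0 : ∀ i : ℕ, ψ i 0 ≤ 1) :
    ∃ φ η : ℕ → ℝ → ℝ, SolvesSPInf T ψ φ η := by
  set x := skorokhodNetInput T ψ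
  have hsol : ∀ i, SolvesSP1 T (x i) (skorokhodRegulator T (x i)) := fun i =>
    (cadlagOn_skorokhodNetInput hcad hψ0 i).elim skorokhodRegulator_solvesSP1
  refine ⟨fun i => x i - skorokhodRegulator T (x i), fun i => skorokhodRegulator T (x i),
    fun _ _ => rfl, fun _ _ _ => rfl, fun i => (hsol i).sub_le_one, fun i => ?_⟩
  exact ⟨(hsol i).zero, (hsol i).monotone.monotoneOn _,
    fun t _ => ((hsol i).rightContinuous t).mono Icc_subset_Ici_self, (hsol i).zeroMassOn⟩

/-- Existence of solutions to the infinite-dimensional Skorokhod problem: for every sequence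
of càdlàg paths `ψ_i` on `[0,T]` with `ψ_i(0) ≤ 1`, there is a solution `(φ, η)`. -/
theorem skorokhod_inf_dim_existence (T : ℝ) (hT : 0 < T) (ψ : ℕ → ℝ → ℝ)
    (hcad : ∀ i : ℕ, CadlagOn T (ψ i)) (hψ0 : ∀ i : ℕ, ψ i 0 ≤ 1) :
    ∃ φ η : ℕ → ℝ → ℝ, SolvesSPInf T ψ φ η :=
  skorokhod_inf_dim_existence_general T ψ hcad hψ0
end

section
/- Fix T > 0 and let ψ = (ψ_i)_{i ≥ 1} be a sequence of càdlàg paths ψ_i : [0,T] → ℝ with ψ_i(0) ≤ 1 for every i. If (φ, η) and (φ̃, η̃) are both solutions of the infinite-dimensional Skorokhod problem for ψ associated with the reflection matrix R_∞, then φ_i(t) = φ̃_i(t) and η_i(t) = η̃_i(t) for every i ≥ 1 and t ∈ [0,T]. -/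
open Set Filter MeasureTheory Topology

/-!
Uniqueness reduces to one dimension by induction on the coordinate: once `η i = η' i`, coordinate
`i + 1` is a one-dimensional Skorokhod problem for the common input `ψ (i + 1) + η i`. In one
dimension, if `β t₀ > β' t₀`, let `s` be the last time before `t₀` with `β ≤ β'`. On `(s, t₀]` we
have `β' < β`, hence `φ < 1`, so `β` does not charge `(s, t₀]`; and `β s ≤ β' s`, since otherwise
`β` would jump at `s` while `φ s < 1`. Thus `β t₀ = β s ≤ β' s ≤ β' t₀`.
-/

theorem ZeroMassOn.mono {T : ℝ} {η : ℝ → ℝ} {A B : Set ℝ} (hAB : A ⊆ B)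
    (h : ZeroMassOn T η B) : ZeroMassOn T η A :=
  let ⟨f, hf, hB⟩ := h
  ⟨f, hf, measure_mono_null hAB hB⟩

theorem ZeroMassOn.exists_stieltjes {T : ℝ} {η : ℝ → ℝ} {A : Set ℝ} (h : ZeroMassOn T η A) :
    ∃ f : StieltjesFunction ℝ, EqOn f η (Icc 0 T) ∧ f.measure A = 0 := by
  obtain ⟨f, hf, hA⟩ := h
  refine ⟨f, fun t ht => ?_, hA⟩
  rw [hf, min_eq_left ht.2, max_eq_right ht.1]

namespace StieltjesFunction

theorem apply_le_apply_of_measure_Ioc_eq_zero (f : StieltjesFunction ℝ) {a b : ℝ}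
    (h : f.measure (Ioc a b) = 0) : f b ≤ f a := by
  rw [measure_Ioc, ENNReal.ofReal_eq_zero] at h
  linarith

theorem apply_le_of_measure_singleton_eq_zero (f : StieltjesFunction ℝ) {a c : ℝ}
    (h : f.measure {a} = 0) (hc : ∀ u < a, f u ≤ c) : f a ≤ c := by
  have hleft : Function.leftLim f a ≤ c :=
    le_of_tendsto (f.mono.tendsto_leftLim a) (eventually_nhdsWithin_of_forall hc)
  rw [measure_singleton, ENNReal.ofReal_eq_zero] at h
  linarith

end StieltjesFunction

theorem le_of_zeroMassOn_setOf_lt {T : ℝ} {β β' : ℝ → ℝ} (h0 : β 0 ≤ β' 0)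
    (hβ' : MonotoneOn β' (Icc 0 T)) (hβ : ZeroMassOn T β {t ∈ Icc 0 T | β' t < β t}) :
    ∀ t ∈ Icc 0 T, β t ≤ β' t := by
  intro t₀ ht₀
  by_contra! hgt
  obtain ⟨f, hfβ, hf⟩ := hβ.exists_stieltjes
  set S : Set ℝ := {u ∈ Icc 0 t₀ | β u ≤ β' u}
  have h0S : (0 : ℝ) ∈ S := ⟨⟨le_rfl, ht₀.1⟩, h0⟩
  have hSbdd : BddAbove S := ⟨t₀, fun u hu => hu.1.2⟩
  set s := sSup S
  have hs0 : 0 ≤ s := le_csSup hSbdd h0S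
  have hst₀ : s ≤ t₀ := csSup_le ⟨0, h0S⟩ fun u hu => hu.1.2
  have hs : s ∈ Icc 0 T := ⟨hs0, hst₀.trans ht₀.2⟩
  have hIoc : Ioc s t₀ ⊆ {t ∈ Icc 0 T | β' t < β t} := fun u hu => by
    refine ⟨⟨hs0.trans hu.1.le, hu.2.trans ht₀.2⟩, ?_⟩
    by_contra! hle
    exact (le_csSup hSbdd ⟨⟨hs0.trans hu.1.le, hu.2⟩, hle⟩).not_gt hu.1
  have hs_le : β s ≤ β' s := by
    by_contra! hsgt
    have hs_mem : s ∈ {t ∈ Icc 0 T | β' t < β t} := ⟨hs, hsgt⟩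
    have hatom : f.measure {s} = 0 := measure_mono_null (singleton_subset_iff.2 hs_mem) hf
    refine (hfβ hs ▸ f.apply_le_of_measure_singleton_eq_zero hatom fun u hu => ?_).not_gt hsgt
    obtain ⟨v, hvS, huv⟩ := exists_lt_of_lt_csSup ⟨0, h0S⟩ hu
    have hv : v ∈ Icc 0 T := ⟨hvS.1.1, hvS.1.2.trans ht₀.2⟩
    calc f u ≤ f v := f.mono huv.le
      _ = β v := hfβ hv
      _ ≤ β' v := hvS.2
      _ ≤ β' s := hβ' hv hs (le_csSup hSbdd hvS)
  have hflat : β t₀ ≤ β s := by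
    rw [← hfβ ht₀, ← hfβ hs]
    exact f.apply_le_apply_of_measure_Ioc_eq_zero (measure_mono_null hIoc hf)
  linarith [hβ' hs ht₀ hst₀]

def SolvesSP (T : ℝ) (ζ φ β : ℝ → ℝ) : Prop :=
  (∀ t ∈ Icc 0 T, φ t = ζ t - β t) ∧ (∀ t ∈ Icc 0 T, φ t ≤ 1) ∧
    β 0 = 0 ∧ MonotoneOn β (Icc 0 T) ∧ ZeroMassOn T β {t ∈ Icc 0 T | φ t < 1}

namespace SolvesSP

variable {T : ℝ} {ζ ζ' φ φ' β β' : ℝ → ℝ}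

theorem le (h : SolvesSP T ζ φ β) (h' : SolvesSP T ζ' φ' β') (hζ : EqOn ζ ζ' (Icc 0 T)) :
    ∀ t ∈ Icc 0 T, β t ≤ β' t := by
  obtain ⟨hφ, -, hβ0, -, hβ⟩ := h
  obtain ⟨hφ', hle', hβ0', hβ', -⟩ := h'
  refine le_of_zeroMassOn_setOf_lt (by rw [hβ0, hβ0']) hβ' (hβ.mono ?_)
  rintro t ⟨ht, hlt⟩
  exact ⟨ht, by linarith [hφ t ht, hφ' t ht, hle' t ht, hζ ht]⟩

theorem eqOn (h : SolvesSP T ζ φ β) (h' : SolvesSP T ζ' φ' β') (hζ : EqOn ζ ζ' (Icc 0 T)) :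
    EqOn φ φ' (Icc 0 T) ∧ EqOn β β' (Icc 0 T) := by
  have hβ : EqOn β β' (Icc 0 T) := fun t ht =>
    le_antisymm (h.le h' hζ t ht) (h'.le h hζ.symm t ht)
  refine ⟨fun t ht => ?_, hβ⟩
  rw [h.1 t ht, h'.1 t ht, hζ ht, hβ ht]

end SolvesSP

namespace SolvesSPInf

variable {T : ℝ} {ψ φ η : ℕ → ℝ → ℝ}

theorem solvesSP_zero (h : SolvesSPInf T ψ φ η) : SolvesSP T (ψ 0) (φ 0) (η 0) :=
  ⟨h.1, h.2.2.1 0, (h.2.2.2 0).1, (h.2.2.2 0).2.1, (h.2.2.2 0).2.2.2⟩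

theorem solvesSP_succ (h : SolvesSPInf T ψ φ η) (i : ℕ) :
    SolvesSP T (ψ (i + 1) + η i) (φ (i + 1)) (η (i + 1)) :=
  ⟨fun t ht => by rw [h.2.1 i t ht, Pi.add_apply], h.2.2.1 (i + 1), (h.2.2.2 (i + 1)).1,
    (h.2.2.2 (i + 1)).2.1, (h.2.2.2 (i + 1)).2.2.2⟩

end SolvesSPInf

theorem skorokhod_inf_dim_uniqueness_general (T : ℝ) (ψ : ℕ → ℝ → ℝ)
    (φ η φ' η' : ℕ → ℝ → ℝ)
    (h : SolvesSPInf T ψ φ η) (h' : SolvesSPInf T ψ φ' η') :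
    ∀ i : ℕ, ∀ t ∈ Set.Icc (0 : ℝ) T, φ i t = φ' i t ∧ η i t = η' i t := by
  suffices key : ∀ i, EqOn (φ i) (φ' i) (Icc 0 T) ∧ EqOn (η i) (η' i) (Icc 0 T) from
    fun i t ht => ⟨(key i).1 ht, (key i).2 ht⟩
  intro i
  induction i with
  | zero => exact h.solvesSP_zero.eqOn h'.solvesSP_zero (eqOn_refl _ _)
  | succ i ih =>
    refine (h.solvesSP_succ i).eqOn (h'.solvesSP_succ i) fun t ht => ?_
    simp only [Pi.add_apply, ih.2 ht]

/-- Uniqueness of solutions to the infinite-dimensional Skorokhod problem: any two solutions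
for the same input `ψ` agree on `[0,T]` in every coordinate. -/
theorem skorokhod_inf_dim_uniqueness (T : ℝ) (hT : 0 < T) (ψ : ℕ → ℝ → ℝ)
    (hcad : ∀ i : ℕ, CadlagOn T (ψ i)) (hψ0 : ∀ i : ℕ, ψ i 0 ≤ 1)
    (φ η φ' η' : ℕ → ℝ → ℝ)
    (h : SolvesSPInf T ψ φ η) (h' : SolvesSPInf T ψ φ' η') :
    ∀ i : ℕ, ∀ t ∈ Set.Icc (0 : ℝ) T, φ i t = φ' i t ∧ η i t = η' i t :=
  skorokhod_inf_dim_uniqueness_general T ψ φ η φ' η' h h'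
end

section
/- Fix T > 0 and let ψ = (ψ_i)_{i ≥ 1} and ψ̃ = (ψ̃_i)_{i ≥ 1} be sequences of càdlàg paths on [0,T] with ψ_i(0) ≤ 1 and ψ̃_i(0) ≤ 1 for every i. Suppose (φ, η) solves the infinite-dimensional Skorokhod problem for ψ and (φ̃, η̃) solves it for ψ̃. Then for every M ≥ 1: sup_{t ∈ [0,T]} |η_M(t) − η̃_M(t)| ≤ Σ_{i=1}^{M} sup_{t ∈ [0,T]} |ψ_i(t) − ψ̃_i(t)| and sup_{t ∈ [0,T]} |φ_M(t) − φ̃_M(t)| ≤ 2·Σ_{i=1}^{M} sup_{t ∈ [0,T]} |ψ_i(t) − ψ̃_i(t)|. -/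
/-!
Coordinate `i` of the infinite system is a one-dimensional Skorokhod problem with upper
barrier `1`, driven by `ζ_i = ψ_i + η_{i-1}`, with regulated path `φ_i` and regulator `η_i`.
The regulator is given by the explicit formula `η(t) = max(0, sup_{s ≤ t} ζ(s) - 1)`: the
constraint `φ ≤ 1` forces `η` above this value, and `η` cannot exceed it, because above it
`φ < 1`, where the Stieltjes measure of `η` vanishes. The formula is `1`-Lipschitz in the sup
norm, so `‖η_M - η̃_M‖ ≤ ‖ψ_M - ψ̃_M‖ + ‖η_{M-1} - η̃_{M-1}‖`, and induction on `M` gives the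
first bound; `φ_M = ζ_M - η_M` gives the second.
-/

open Set Filter MeasureTheory Topology

section Cadlag

variable {T : ℝ} {ψ ψ' : ℝ → ℝ}

theorem CadlagOn.continuousWithinAt_Icc (hψ : CadlagOn T ψ) {x : ℝ} (hx : x ∈ Icc 0 T) :
    ContinuousWithinAt ψ (Icc x T) x := by
  rcases hx.2.lt_or_eq with hxT | rfl
  · exact hψ.1 x ⟨hx.1, hxT⟩
  · rw [Icc_self]
    exact continuousWithinAt_singleton

theorem CadlagOn.exists_tendsto_left (hψ : CadlagOn T ψ) {x : ℝ} (hx : x ∈ Icc 0 T) :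
    ∃ l : ℝ, Tendsto ψ (𝓝[Ico 0 x] x) (𝓝 l) := by
  rcases hx.1.eq_or_lt with rfl | h0x
  · simp
  · exact hψ.2 x ⟨h0x, hx.2⟩

theorem CadlagOn.sub (hψ : CadlagOn T ψ) (hψ' : CadlagOn T ψ') : CadlagOn T (ψ - ψ') := by
  refine ⟨fun t ht => (hψ.1 t ht).sub (hψ'.1 t ht), fun t ht => ?_⟩
  obtain ⟨l, hl⟩ := hψ.2 t ht
  obtain ⟨l', hl'⟩ := hψ'.2 t ht
  exact ⟨l - l', hl.sub hl'⟩

theorem CadlagOn.isBounded_image (hψ : CadlagOn T ψ) :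
    Bornology.IsBounded (ψ '' Icc 0 T) := by
  refine isCompact_Icc.induction_on (p := fun s => Bornology.IsBounded (ψ '' s)) (by simp)
    (fun s t hst ht => ht.subset (image_mono hst))
    (fun s t hs ht => by rw [image_union]; exact hs.union ht) fun x hx => ?_
  obtain ⟨l, hl⟩ := hψ.exists_tendsto_left hx
  have hr := hψ.continuousWithinAt_Icc hx
  refine ⟨ψ ⁻¹' Metric.ball l 1 ∪ ψ ⁻¹' Metric.ball (ψ x) 1, ?_, ?_⟩
  · rw [← Ico_union_Icc_eq_Icc hx.1 hx.2, nhdsWithin_union]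
    exact union_mem_sup (hl (Metric.ball_mem_nhds _ one_pos))
      (hr (Metric.ball_mem_nhds _ one_pos))
  · rw [image_union]
    exact (Metric.isBounded_ball.subset (image_preimage_subset _ _)).union
      (Metric.isBounded_ball.subset (image_preimage_subset _ _))

theorem CadlagOn.abs_sub_le_iSup (hψ : CadlagOn T ψ) (hψ' : CadlagOn T ψ') {t : ℝ}
    (ht : t ∈ Icc 0 T) : |ψ t - ψ' t| ≤ ⨆ s : Icc (0 : ℝ) T, |ψ s - ψ' s| := by
  obtain ⟨C, hC⟩ := isBounded_iff_forall_norm_le.1 (hψ.sub hψ').isBounded_image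
  refine le_ciSup (f := fun s : Icc (0 : ℝ) T => |ψ s - ψ' s|) ⟨C, ?_⟩ ⟨t, ht⟩
  rintro _ ⟨s, rfl⟩
  exact hC _ (mem_image_of_mem _ s.2)

end Cadlag

theorem StieltjesFunction.le_of_measure_superlevel_eq_zero (f : StieltjesFunction ℝ)
    {a t S : ℝ} (hat : a ≤ t) (ha : f a ≤ S)
    (hnull : f.measure {s ∈ Icc a t | S < f s} = 0) : f t ≤ S := by
  set B := {s ∈ Icc a t | f s ≤ S}
  have hBne : B.Nonempty := ⟨a, left_mem_Icc.2 hat, ha⟩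
  have hBbdd : BddAbove B := ⟨t, fun s hs => hs.1.2⟩
  -- `u` is the last time `f` is at most `S`: `f` cannot jump at `u`, nor grow on `(u, t]`.
  set u := sSup B
  have hau : a ≤ u := le_csSup hBbdd ⟨left_mem_Icc.2 hat, ha⟩
  have hut : u ≤ t := csSup_le hBne fun s hs => hs.1.2
  have hbelow : ∀ s < u, f s ≤ S := fun s hs => by
    obtain ⟨b, hb, hsb⟩ := exists_lt_of_lt_csSup hBne hs
    exact (f.mono hsb.le).trans hb.2
  have habove : Ioc u t ⊆ {s ∈ Icc a t | S < f s} := fun s hs => by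
    have hs' : s ∈ Icc a t := ⟨hau.trans hs.1.le, hs.2⟩
    refine ⟨hs', lt_of_not_ge fun hsS => ?_⟩
    exact (le_csSup hBbdd (show s ∈ B from ⟨hs', hsS⟩)).not_gt hs.1
  have hfu : f u ≤ S := by
    by_contra! hSu
    have hu : {u} ⊆ {s ∈ Icc a t | S < f s} := singleton_subset_iff.2 ⟨⟨hau, hut⟩, hSu⟩
    have hjump := measure_mono_null hu hnull
    rw [f.measure_singleton, ENNReal.ofReal_eq_zero] at hjump
    have : Function.leftLim f u ≤ S :=
      le_of_tendsto (f.mono.tendsto_leftLim u) (eventually_nhdsWithin_of_forall hbelow)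
    linarith
  have hflat := measure_mono_null habove hnull
  rw [f.measure_Ioc, ENNReal.ofReal_eq_zero] at hflat
  linarith

noncomputable def skorokhodMap (ζ : ℝ → ℝ) (t : ℝ) : ℝ :=
  max 0 (sSup (ζ '' Icc 0 t) - 1)

theorem skorokhodMap_le_add {ζ ζ' : ℝ → ℝ} {t D : ℝ} (ht : 0 ≤ t) (hD : 0 ≤ D)
    (hbdd : BddAbove (ζ' '' Icc 0 t)) (hle : ∀ s ∈ Icc 0 t, ζ s ≤ ζ' s + D) :
    skorokhodMap ζ t ≤ skorokhodMap ζ' t + D := by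
  have hsup : sSup (ζ '' Icc 0 t) ≤ sSup (ζ' '' Icc 0 t) + D := by
    refine csSup_le ((nonempty_Icc.2 ht).image ζ) ?_
    rintro _ ⟨s, hs, rfl⟩
    linarith [hle s hs, le_csSup hbdd (mem_image_of_mem ζ' hs)]
  unfold skorokhodMap
  exact max_le (by linarith [le_max_left 0 (sSup (ζ' '' Icc 0 t) - 1)])
    (by linarith [le_max_right 0 (sSup (ζ' '' Icc 0 t) - 1)])

theorem abs_skorokhodMap_sub_le {ζ ζ' : ℝ → ℝ} {t D : ℝ} (ht : 0 ≤ t)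
    (hbdd : BddAbove (ζ '' Icc 0 t)) (hbdd' : BddAbove (ζ' '' Icc 0 t))
    (hle : ∀ s ∈ Icc 0 t, |ζ s - ζ' s| ≤ D) :
    |skorokhodMap ζ t - skorokhodMap ζ' t| ≤ D := by
  have hD : 0 ≤ D := (abs_nonneg _).trans (hle 0 (left_mem_Icc.2 ht))
  have h₁ := skorokhodMap_le_add (ζ := ζ) (ζ' := ζ') ht hD hbdd' fun s hs => by
    linarith [(abs_sub_le_iff.1 (hle s hs)).1]
  have h₂ := skorokhodMap_le_add (ζ := ζ') (ζ' := ζ) ht hD hbdd fun s hs => by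
    linarith [(abs_sub_le_iff.1 (hle s hs)).2]
  exact abs_sub_le_iff.2 ⟨by linarith, by linarith⟩

structure SolvesSP_s7 (T : ℝ) (ζ φ η : ℝ → ℝ) : Prop where
  eq_sub : ∀ t ∈ Icc (0 : ℝ) T, φ t = ζ t - η t
  le_one : ∀ t ∈ Icc (0 : ℝ) T, φ t ≤ 1
  zero : η 0 = 0
  monotoneOn : MonotoneOn η (Icc 0 T)
  zeroMassOn : ZeroMassOn T η {t ∈ Icc (0 : ℝ) T | φ t < 1}

namespace SolvesSP_s7

variable {T t : ℝ} {ζ φ η ζ' φ' η' : ℝ → ℝ}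

theorem le_add_one (h : SolvesSP_s7 T ζ φ η) (ht : t ∈ Icc 0 T) {s : ℝ} (hs : s ∈ Icc 0 t) :
    ζ s ≤ η t + 1 := by
  have hsT : s ∈ Icc 0 T := ⟨hs.1, hs.2.trans ht.2⟩
  have hφ := h.le_one s hsT
  rw [h.eq_sub s hsT] at hφ
  linarith [h.monotoneOn hsT ht hs.2]

theorem bddAbove_image (h : SolvesSP_s7 T ζ φ η) (ht : t ∈ Icc 0 T) :
    BddAbove (ζ '' Icc 0 t) := by
  refine ⟨η t + 1, ?_⟩
  rintro _ ⟨s, hs, rfl⟩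
  exact h.le_add_one ht hs

theorem skorokhodMap_le (h : SolvesSP_s7 T ζ φ η) (ht : t ∈ Icc 0 T) :
    skorokhodMap ζ t ≤ η t := by
  refine max_le ?_ (sub_le_iff_le_add.2 (csSup_le ((nonempty_Icc.2 ht.1).image ζ) ?_))
  · rw [← h.zero]
    exact h.monotoneOn ⟨le_rfl, ht.1.trans ht.2⟩ ht ht.1
  · rintro _ ⟨s, hs, rfl⟩
    exact h.le_add_one ht hs

theorem le_skorokhodMap (h : SolvesSP_s7 T ζ φ η) (ht : t ∈ Icc 0 T) :
    η t ≤ skorokhodMap ζ t := by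
  obtain ⟨f, hf, hnull⟩ := h.zeroMassOn
  have hfη : ∀ s ∈ Icc 0 T, f s = η s := fun s hs => by
    rw [hf, min_eq_left hs.2, max_eq_right hs.1]
  have hsub : {s ∈ Icc 0 t | skorokhodMap ζ t < f s} ⊆ {s ∈ Icc 0 T | φ s < 1} := by
    rintro s ⟨hs, hSs⟩
    have hsT : s ∈ Icc 0 T := ⟨hs.1, hs.2.trans ht.2⟩
    have hζ : ζ s - 1 ≤ skorokhodMap ζ t :=
      (sub_le_sub_right (le_csSup (h.bddAbove_image ht) (mem_image_of_mem ζ hs)) 1).trans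
        (le_max_right _ _)
    refine ⟨hsT, ?_⟩
    rw [h.eq_sub s hsT, ← hfη s hsT]
    linarith
  have hf0 : f 0 ≤ skorokhodMap ζ t := by
    rw [hfη 0 ⟨le_rfl, ht.1.trans ht.2⟩, h.zero]
    exact le_max_left _ _
  rw [← hfη t ht]
  exact f.le_of_measure_superlevel_eq_zero ht.1 hf0 (measure_mono_null hsub hnull)

theorem eq_skorokhodMap (h : SolvesSP_s7 T ζ φ η) (ht : t ∈ Icc 0 T) :
    η t = skorokhodMap ζ t :=
  (h.le_skorokhodMap ht).antisymm (h.skorokhodMap_le ht)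

theorem abs_regulator_sub_le (h : SolvesSP_s7 T ζ φ η) (h' : SolvesSP_s7 T ζ' φ' η') {D : ℝ}
    (hD : ∀ s ∈ Icc 0 T, |ζ s - ζ' s| ≤ D) (ht : t ∈ Icc 0 T) : |η t - η' t| ≤ D := by
  rw [h.eq_skorokhodMap ht, h'.eq_skorokhodMap ht]
  exact abs_skorokhodMap_sub_le ht.1 (h.bddAbove_image ht) (h'.bddAbove_image ht)
    fun s hs => hD s ⟨hs.1, hs.2.trans ht.2⟩

theorem abs_regulated_sub_le (h : SolvesSP_s7 T ζ φ η) (h' : SolvesSP_s7 T ζ' φ' η') {D : ℝ}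
    (hD : ∀ s ∈ Icc 0 T, |ζ s - ζ' s| ≤ D) (ht : t ∈ Icc 0 T) :
    |φ t - φ' t| ≤ 2 * D := by
  rw [h.eq_sub t ht, h'.eq_sub t ht]
  calc |ζ t - η t - (ζ' t - η' t)| = |(ζ t - ζ' t) - (η t - η' t)| := by ring_nf
    _ ≤ |ζ t - ζ' t| + |η t - η' t| := abs_sub _ _
    _ ≤ 2 * D := by linarith [hD t ht, h.abs_regulator_sub_le h' hD ht]

end SolvesSP_s7

def coordInput (ψ η : ℕ → ℝ → ℝ) : ℕ → ℝ → ℝ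
  | 0 => ψ 0
  | j + 1 => ψ (j + 1) + η j

namespace SolvesSPInf

variable {T : ℝ} {ψ φ η ψ' φ' η' : ℕ → ℝ → ℝ}

theorem solvesSP (h : SolvesSPInf T ψ φ η) (i : ℕ) :
    SolvesSP_s7 T (coordInput ψ η i) (φ i) (η i) := by
  obtain ⟨h0, hsucc, hle, hη⟩ := h
  refine ⟨?_, hle i, (hη i).1, (hη i).2.1, (hη i).2.2.2⟩
  cases i with
  | zero => exact h0
  | succ j =>
    intro t ht
    rw [hsucc j t ht]
    rfl

theorem abs_coordInput_sub_le (h : SolvesSPInf T ψ φ η) (h' : SolvesSPInf T ψ' φ' η')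
    {D : ℕ → ℝ} (hD : ∀ i, ∀ s ∈ Icc 0 T, |ψ i s - ψ' i s| ≤ D i) (M : ℕ) :
    ∀ s ∈ Icc 0 T,
      |coordInput ψ η M s - coordInput ψ' η' M s| ≤ ∑ i ∈ Finset.range (M + 1), D i := by
  induction M with
  | zero => simpa [coordInput] using hD 0
  | succ j ih =>
    intro s hs
    have hη := (h.solvesSP j).abs_regulator_sub_le (h'.solvesSP j) ih hs
    rw [Finset.sum_range_succ]
    calc |coordInput ψ η (j + 1) s - coordInput ψ' η' (j + 1) s|
        = |(η j s - η' j s) + (ψ (j + 1) s - ψ' (j + 1) s)| := by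
          simp only [coordInput, Pi.add_apply]
          ring_nf
      _ ≤ _ := (abs_add_le _ _).trans (add_le_add hη (hD _ s hs))

end SolvesSPInf

theorem skorokhod_inf_dim_coord_lipschitz_general (T : ℝ) (ψ ψ' : ℕ → ℝ → ℝ)
    (hcad : ∀ i : ℕ, CadlagOn T (ψ i)) (hcad' : ∀ i : ℕ, CadlagOn T (ψ' i))
    (φ η φ' η' : ℕ → ℝ → ℝ)
    (h : SolvesSPInf T ψ φ η) (h' : SolvesSPInf T ψ' φ' η') :
    ∀ M : ℕ,
      (∀ t ∈ Set.Icc (0 : ℝ) T,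
        |η M t - η' M t| ≤
          ∑ i ∈ Finset.range (M + 1), ⨆ s : Set.Icc (0 : ℝ) T, |ψ i s - ψ' i s|) ∧
      (∀ t ∈ Set.Icc (0 : ℝ) T,
        |φ M t - φ' M t| ≤
          2 * ∑ i ∈ Finset.range (M + 1), ⨆ s : Set.Icc (0 : ℝ) T, |ψ i s - ψ' i s|) := by
  have hinput := h.abs_coordInput_sub_le h' fun i s hs => (hcad i).abs_sub_le_iSup (hcad' i) hs
  exact fun M => ⟨fun t ht => (h.solvesSP M).abs_regulator_sub_le (h'.solvesSP M) (hinput M) ht,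
    fun t ht => (h.solvesSP M).abs_regulated_sub_le (h'.solvesSP M) (hinput M) ht⟩

/-- Coordinatewise Lipschitz property of the infinite-dimensional Skorokhod map: for every
`M` (Lean index `M` is the paper's coordinate `M + 1 ≥ 1`),
`sup_{[0,T]} |η_M - η̃_M| ≤ ∑_{i=1}^{M} sup_{[0,T]} |ψ_i - ψ̃_i|` and
`sup_{[0,T]} |φ_M - φ̃_M| ≤ 2 ∑_{i=1}^{M} sup_{[0,T]} |ψ_i - ψ̃_i|`. -/
theorem skorokhod_inf_dim_coord_lipschitz (T : ℝ) (hT : 0 < T) (ψ ψ' : ℕ → ℝ → ℝ)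
    (hcad : ∀ i : ℕ, CadlagOn T (ψ i)) (hcad' : ∀ i : ℕ, CadlagOn T (ψ' i))
    (hψ0 : ∀ i : ℕ, ψ i 0 ≤ 1) (hψ0' : ∀ i : ℕ, ψ' i 0 ≤ 1)
    (φ η φ' η' : ℕ → ℝ → ℝ)
    (h : SolvesSPInf T ψ φ η) (h' : SolvesSPInf T ψ' φ' η') :
    ∀ M : ℕ,
      (∀ t ∈ Set.Icc (0 : ℝ) T,
        |η M t - η' M t| ≤
          ∑ i ∈ Finset.range (M + 1), ⨆ s : Set.Icc (0 : ℝ) T, |ψ i s - ψ' i s|) ∧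
      (∀ t ∈ Set.Icc (0 : ℝ) T,
        |φ M t - φ' M t| ≤
          2 * ∑ i ∈ Finset.range (M + 1), ⨆ s : Set.Icc (0 : ℝ) T, |ψ i s - ψ' i s|) :=
  skorokhod_inf_dim_coord_lipschitz_general T ψ ψ' hcad hcad' φ η φ' η' h h'
end

section
/- Fix T > 0 and let ψ = (ψ_i)_{i ≥ 1} and ψ̃ = (ψ̃_i)_{i ≥ 1} be sequences of càdlàg paths on [0,T] with ψ_i(0) ≤ 1 and ψ̃_i(0) ≤ 1 for every i. Suppose (φ, η) solves the infinite-dimensional Skorokhod problem for ψ and (φ̃, η̃) solves it for ψ̃. Then, with the weighted norm ‖x‖_∞ := Σ_{i=1}^{∞} 2^{−i} · sup_{t ∈ [0,T]} |x_i(t)| (values in [0,∞]), one has ‖η − η̃‖_∞ ≤ 2·‖ψ − ψ̃‖_∞ and ‖φ − φ̃‖_∞ ≤ 4·‖ψ − ψ̃‖_∞. -/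
/-!
Each coordinate of the infinite system is a one-dimensional Skorokhod problem with barrier `1`,
driven by `χ_i = ψ_i + η_{i-1}`. Its regulator is minimal: `η(t) ≤ c` as soon as `χ ≤ 1 + c` on
`[0,t]`, because the Stieltjes measure of `η` does not charge the times where `η > c` (there
`φ = χ - η < 1`). Comparing with a second solution gives `sup |η - η'| ≤ sup |χ - χ'|`, hence
`a_i ≤ b_i + a_{i-1}` for `a_i = sup |η_i - η'_i|`, `b_i = sup |ψ_i - ψ'_i|`. So `a_i ≤ b_1 + ⋯ + b_i`,
and against the weights `2^{-i}` these partial sums cost the factor `∑_{k ≥ 0} 2^{-k} = 2`.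
Finally `sup |φ_i - φ'_i| ≤ b_i + a_{i-1} + a_i` gives the constant `1 + 2/2 + 2 = 4`.
-/

open Set Filter MeasureTheory Topology

/-- The weighted uniform distance `‖x - y‖_∞ = ∑_{i=1}^∞ 2^{-i} sup_{t ∈ [0,T]} |x_i(t) - y_i(t)|`
on sequences of paths (with values in `[0,∞]`).  Lean index `i` is the paper's coordinate
`i + 1`, whence the weight `2^{-(i+1)}`. -/
noncomputable def wdist (T : ℝ) (x y : ℕ → ℝ → ℝ) : ENNReal :=
  ∑' i : ℕ, (2⁻¹ : ENNReal) ^ (i + 1) *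
    ⨆ t : Set.Icc (0 : ℝ) T, ENNReal.ofReal |x i t - y i t|

namespace StieltjesFunction

variable (f : StieltjesFunction ℝ)

theorem measure_Ioc_sep_le_le (a t c : ℝ) :
    f.measure {s ∈ Ioc a t | f s ≤ c} ≤ ENNReal.ofReal (c - f a) := by
  set B := {s ∈ Ioc a t | f s ≤ c}
  -- `B` is an initial segment of `Ioc a t`, ending at `sSup B`, included or not.
  rcases B.eq_empty_or_nonempty with hB | hB
  · simp [hB]
  have hbdd : BddAbove B := ⟨t, fun s hs => hs.1.2⟩
  by_cases hσ : sSup B ∈ B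
  · calc f.measure B ≤ f.measure (Ioc a (sSup B)) :=
          measure_mono fun s hs => ⟨hs.1.1, le_csSup hbdd hs⟩
      _ ≤ ENNReal.ofReal (c - f a) := by
          rw [f.measure_Ioc]; exact ENNReal.ofReal_le_ofReal (by linarith [hσ.2])
  · have hleft : Function.leftLim f (sSup B) ≤ c := by
      refine le_of_tendsto (f.mono.tendsto_leftLim _) (eventually_nhdsWithin_of_forall ?_)
      intro u hu
      obtain ⟨s, hs, hus⟩ := exists_lt_of_lt_csSup hB hu
      exact (f.mono hus.le).trans hs.2
    calc f.measure B ≤ f.measure (Ioo a (sSup B)) :=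
          measure_mono fun s hs =>
            ⟨hs.1.1, (le_csSup hbdd hs).lt_of_ne fun h => hσ (h ▸ hs)⟩
      _ ≤ ENNReal.ofReal (c - f a) := by
          rw [f.measure_Ioo]; exact ENNReal.ofReal_le_ofReal (by linarith)

theorem le_of_measure_Ioc_sep_lt_eq_zero {a t c : ℝ} (hc : f a ≤ c)
    (h : f.measure {s ∈ Ioc a t | c < f s} = 0) : f t ≤ c := by
  have hmeas : ENNReal.ofReal (f t - f a) ≤ ENNReal.ofReal (c - f a) :=
    calc ENNReal.ofReal (f t - f a) = f.measure (Ioc a t) := (f.measure_Ioc a t).symm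
      _ ≤ f.measure ({s ∈ Ioc a t | f s ≤ c} ∪ {s ∈ Ioc a t | c < f s}) :=
          measure_mono fun s hs => (le_or_gt (f s) c).imp (⟨hs, ·⟩) (⟨hs, ·⟩)
      _ ≤ f.measure {s ∈ Ioc a t | f s ≤ c} + f.measure {s ∈ Ioc a t | c < f s} :=
          measure_union_le _ _
      _ ≤ ENNReal.ofReal (c - f a) := by rw [h, add_zero]; exact f.measure_Ioc_sep_le_le a t c
  linarith [(ENNReal.ofReal_le_ofReal_iff (sub_nonneg.mpr hc)).mp hmeas]

end StieltjesFunction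

structure SolvesSP1D (T : ℝ) (χ φ η : ℝ → ℝ) : Prop where
  eqOn : EqOn φ (χ - η) (Icc 0 T)
  le_one : ∀ t ∈ Icc 0 T, φ t ≤ 1
  zero : η 0 = 0
  monotoneOn : MonotoneOn η (Icc 0 T)
  zeroMassOn : ZeroMassOn T η {t ∈ Icc 0 T | φ t < 1}

namespace SolvesSP1D

variable {T : ℝ} {χ φ η χ' φ' η' : ℝ → ℝ}

theorem nonneg (h : SolvesSP1D T χ φ η) {t : ℝ} (ht : t ∈ Icc 0 T) : 0 ≤ η t :=
  h.zero ▸ h.monotoneOn ⟨le_rfl, ht.1.trans ht.2⟩ ht ht.1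

theorem le_of_forall_le (h : SolvesSP1D T χ φ η) {t c : ℝ} (ht : t ∈ Icc 0 T) (hc : 0 ≤ c)
    (hχ : ∀ s ∈ Icc 0 t, χ s ≤ 1 + c) : η t ≤ c := by
  obtain ⟨f, hf, hnull⟩ := h.zeroMassOn
  have hfη : ∀ s ∈ Icc 0 T, f s = η s := fun s hs => by
    rw [hf, min_eq_left hs.2, max_eq_right hs.1]
  have hf0 : f 0 = 0 := by rw [hf, max_eq_left (min_le_left 0 T), h.zero]
  rw [← hfη t ht]
  refine f.le_of_measure_Ioc_sep_lt_eq_zero (hf0.trans_le hc) (measure_mono_null ?_ hnull)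
  rintro s ⟨hs, hcs⟩
  have hsT : s ∈ Icc 0 T := ⟨hs.1.le, hs.2.trans ht.2⟩
  have hχs := hχ s ⟨hs.1.le, hs.2⟩
  refine ⟨hsT, ?_⟩
  rw [h.eqOn hsT, Pi.sub_apply, ← hfη s hsT]
  linarith

theorem sub_le (h : SolvesSP1D T χ φ η) (h' : SolvesSP1D T χ' φ' η') {t M : ℝ}
    (ht : t ∈ Icc 0 T) (hM0 : 0 ≤ M) (hM : ∀ s ∈ Icc 0 T, χ s - χ' s ≤ M) :
    η t - η' t ≤ M := by
  suffices η t ≤ η' t + M by linarith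
  refine h.le_of_forall_le ht (add_nonneg (h'.nonneg ht) hM0) fun s hs => ?_
  have hsT : s ∈ Icc 0 T := ⟨hs.1, hs.2.trans ht.2⟩
  have h1 := hM s hsT
  have h2 := h'.le_one s hsT
  rw [h'.eqOn hsT, Pi.sub_apply] at h2
  linarith [h'.monotoneOn hsT ht hs.2]

theorem dist_le (h : SolvesSP1D T χ φ η) (h' : SolvesSP1D T χ' φ' η') {t M : ℝ}
    (ht : t ∈ Icc 0 T) (hM : ∀ s ∈ Icc 0 T, dist (χ s) (χ' s) ≤ M) :
    dist (η t) (η' t) ≤ M := by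
  have hM0 : 0 ≤ M := dist_nonneg.trans (hM 0 ⟨le_rfl, ht.1.trans ht.2⟩)
  simp only [Real.dist_eq, abs_sub_le_iff] at hM ⊢
  exact ⟨h.sub_le h' ht hM0 fun s hs => (hM s hs).1,
    h'.sub_le h ht hM0 fun s hs => (hM s hs).2⟩

end SolvesSP1D

open scoped ENNReal

noncomputable def supDist (T : ℝ) (x y : ℝ → ℝ) : ℝ≥0∞ :=
  ⨆ t : Icc (0 : ℝ) T, edist (x t) (y t)

section supDist

variable {T : ℝ} {x y x' y' u v : ℝ → ℝ}

theorem edist_le_supDist {t : ℝ} (ht : t ∈ Icc 0 T) : edist (x t) (y t) ≤ supDist T x y :=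
  le_iSup (fun s : Icc (0 : ℝ) T => edist (x s) (y s)) ⟨t, ht⟩

@[simp]
theorem supDist_zero : supDist T 0 0 = 0 := by simp [supDist]

theorem supDist_congr (hx : EqOn x x' (Icc 0 T)) (hy : EqOn y y' (Icc 0 T)) :
    supDist T x y = supDist T x' y' :=
  iSup_congr fun t => by rw [hx t.2, hy t.2]

theorem supDist_add_le : supDist T (x + x') (y + y') ≤ supDist T x y + supDist T x' y' :=
  iSup_le fun t => (edist_add_add_le _ _ _ _).trans
    (add_le_add (edist_le_supDist t.2) (edist_le_supDist t.2))

theorem supDist_sub_le : supDist T (x - x') (y - y') ≤ supDist T x y + supDist T x' y' := by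
  simpa only [sub_eq_add_neg, supDist, Pi.add_apply, Pi.neg_apply, edist_neg_neg] using
    supDist_add_le (T := T) (x := x) (y := y) (x' := -x') (y' := -y')

theorem supDist_le_of_forall_dist_le
    (h : ∀ M : ℝ, (∀ s ∈ Icc 0 T, dist (x s) (y s) ≤ M) → ∀ t ∈ Icc 0 T, dist (u t) (v t) ≤ M) :
    supDist T u v ≤ supDist T x y := by
  by_cases htop : supDist T x y = ∞
  · exact htop ▸ le_top
  refine iSup_le fun t => ?_
  rw [← ENNReal.ofReal_toReal htop, edist_le_ofReal ENNReal.toReal_nonneg]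
  refine h _ (fun s hs => ?_) t t.2
  rw [dist_edist]
  exact ENNReal.toReal_mono htop (edist_le_supDist hs)

end supDist

namespace SolvesSP1D

variable {T : ℝ} {χ φ η χ' φ' η' : ℝ → ℝ}

theorem supDist_le (h : SolvesSP1D T χ φ η) (h' : SolvesSP1D T χ' φ' η') :
    supDist T η η' ≤ supDist T χ χ' :=
  supDist_le_of_forall_dist_le fun _ hM _ ht => h.dist_le h' ht hM

theorem supDist_le_add (h : SolvesSP1D T χ φ η) (h' : SolvesSP1D T χ' φ' η') :
    supDist T φ φ' ≤ supDist T χ χ' + supDist T η η' :=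
  (supDist_congr h.eqOn h'.eqOn).trans_le supDist_sub_le

end SolvesSP1D

/-- Applied to `η`, this gives the paper's `η_{i-1}` (with `η_0 ≡ 0`) at Lean index `i`. -/
def shiftSeq {M : Type*} [Zero M] (x : ℕ → M) : ℕ → M
  | 0 => 0
  | i + 1 => x i

theorem le_sum_range_of_le_add_shiftSeq {M : Type*} [AddCommMonoid M] [PartialOrder M]
    [IsOrderedAddMonoid M] {a b : ℕ → M} (h : ∀ i, a i ≤ b i + shiftSeq a i) (i : ℕ) :
    a i ≤ ∑ j ∈ Finset.range (i + 1), b j := by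
  induction i with
  | zero => simpa [shiftSeq] using h 0
  | succ i ih =>
    calc a (i + 1) ≤ b (i + 1) + a i := h (i + 1)
      _ ≤ b (i + 1) + ∑ j ∈ Finset.range (i + 1), b j := add_le_add_right ih _
      _ = ∑ j ∈ Finset.range (i + 2), b j := by rw [Finset.sum_range_succ _ (i + 1), add_comm]

theorem SolvesSPInf.solvesSP1D {T : ℝ} {ψ φ η : ℕ → ℝ → ℝ} (h : SolvesSPInf T ψ φ η) (i : ℕ) :
    SolvesSP1D T (ψ i + shiftSeq η i) (φ i) (η i) where
  eqOn := by
    cases i with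
    | zero => exact fun t ht => by simp [shiftSeq, h.1 t ht]
    | succ i => exact fun t ht => by simp [shiftSeq, h.2.1 i t ht]
  le_one := h.2.2.1 i
  zero := (h.2.2.2 i).1
  monotoneOn := (h.2.2.2 i).2.1
  zeroMassOn := (h.2.2.2 i).2.2.2

noncomputable def weightedSum (a : ℕ → ℝ≥0∞) : ℝ≥0∞ :=
  ∑' i, 2⁻¹ ^ (i + 1) * a i

section weightedSum

variable {a b : ℕ → ℝ≥0∞}

theorem wdist_eq_weightedSum (T : ℝ) (x y : ℕ → ℝ → ℝ) :
    wdist T x y = weightedSum fun i => supDist T (x i) (y i) := by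
  simp only [wdist, weightedSum, supDist, edist_dist, Real.dist_eq]

theorem weightedSum_mono (h : ∀ i, a i ≤ b i) : weightedSum a ≤ weightedSum b :=
  ENNReal.tsum_le_tsum fun i => by gcongr; exact h i

theorem weightedSum_add : weightedSum (a + b) = weightedSum a + weightedSum b := by
  simp only [weightedSum, Pi.add_apply, mul_add, ENNReal.tsum_add]

theorem weightedSum_shiftSeq : weightedSum (shiftSeq a) = 2⁻¹ * weightedSum a := by
  rw [weightedSum, tsum_eq_zero_add' ENNReal.summable, weightedSum, ← ENNReal.tsum_mul_left]
  simp only [shiftSeq, mul_zero, zero_add, pow_succ' _ (_ + 1), mul_assoc]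

theorem weightedSum_sum_range (b : ℕ → ℝ≥0∞) :
    weightedSum (fun i => ∑ j ∈ Finset.range (i + 1), b j) = 2 * weightedSum b := by
  have htail : ∀ j, ∑' i, (if j ≤ i then (2⁻¹ : ℝ≥0∞) ^ (i + 1) else 0) = 2 * 2⁻¹ ^ (j + 1) := by
    intro j
    rw [← ENNReal.summable.sum_add_tsum_nat_add',
      Finset.sum_eq_zero fun i hi => if_neg (by simpa using hi), zero_add]
    simp only [le_add_iff_nonneg_left, zero_le, if_true]
    have hpow : ∀ i, (2⁻¹ : ℝ≥0∞) ^ (i + j + 1) = 2⁻¹ ^ (j + 1) * 2⁻¹ ^ i := fun i => by ring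
    rw [tsum_congr hpow, ENNReal.tsum_mul_left, ENNReal.tsum_geometric, ENNReal.one_sub_inv_two,
      inv_inv, mul_comm]
  calc weightedSum (fun i => ∑ j ∈ Finset.range (i + 1), b j)
      = ∑' i, ∑' j, (if j ≤ i then 2⁻¹ ^ (i + 1) else 0) * b j := by
        refine tsum_congr fun i => ?_
        rw [Finset.mul_sum, tsum_eq_sum (s := Finset.range (i + 1)) fun j hj => by simp_all]
        exact Finset.sum_congr rfl fun j hj => by simp_all
    _ = ∑' j, ∑' i, (if j ≤ i then 2⁻¹ ^ (i + 1) else 0) * b j := ENNReal.tsum_comm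
    _ = 2 * weightedSum b := by
        simp only [ENNReal.tsum_mul_right, htail, weightedSum, ← ENNReal.tsum_mul_left, mul_assoc]

theorem weightedSum_le_two_mul (h : ∀ i, a i ≤ b i + shiftSeq a i) :
    weightedSum a ≤ 2 * weightedSum b :=
  (weightedSum_mono (le_sum_range_of_le_add_shiftSeq h)).trans_eq (weightedSum_sum_range b)

end weightedSum

theorem skorokhod_inf_dim_lipschitz_general (T : ℝ) (ψ ψ' : ℕ → ℝ → ℝ)
    (φ η φ' η' : ℕ → ℝ → ℝ)
    (h : SolvesSPInf T ψ φ η) (h' : SolvesSPInf T ψ' φ' η') :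
    wdist T η η' ≤ 2 * wdist T ψ ψ' ∧ wdist T φ φ' ≤ 4 * wdist T ψ ψ' := by
  set a := fun i => supDist T (η i) (η' i)
  set b := fun i => supDist T (ψ i) (ψ' i)
  have hdrive : ∀ i,
      supDist T (ψ i + shiftSeq η i) (ψ' i + shiftSeq η' i) ≤ b i + shiftSeq a i := by
    rintro (_ | i) <;> exact supDist_add_le.trans_eq (by simp [shiftSeq, a, b])
  have ha : ∀ i, a i ≤ b i + shiftSeq a i := fun i =>
    ((h.solvesSP1D i).supDist_le (h'.solvesSP1D i)).trans (hdrive i)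
  have hφ : ∀ i, supDist T (φ i) (φ' i) ≤ (b + shiftSeq a + a) i := fun i =>
    ((h.solvesSP1D i).supDist_le_add (h'.solvesSP1D i)).trans (add_le_add_left (hdrive i) _)
  have hη : weightedSum a ≤ 2 * weightedSum b := weightedSum_le_two_mul ha
  simp only [wdist_eq_weightedSum]
  refine ⟨hη, ?_⟩
  calc weightedSum _ ≤ weightedSum (b + shiftSeq a + a) := weightedSum_mono hφ
    _ = weightedSum b + 2⁻¹ * weightedSum a + weightedSum a := by
      rw [weightedSum_add, weightedSum_add, weightedSum_shiftSeq]
    _ ≤ weightedSum b + 2⁻¹ * (2 * weightedSum b) + 2 * weightedSum b := by gcongr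
    _ = 4 * weightedSum b := by
      rw [← mul_assoc, ENNReal.inv_mul_cancel two_ne_zero ENNReal.ofNat_ne_top]
      ring

/-- Lipschitz property of the infinite-dimensional Skorokhod map in the weighted uniform norm:
`‖η - η̃‖_∞ ≤ 2 ‖ψ - ψ̃‖_∞` and `‖φ - φ̃‖_∞ ≤ 4 ‖ψ - ψ̃‖_∞`. -/
theorem skorokhod_inf_dim_lipschitz (T : ℝ) (hT : 0 < T) (ψ ψ' : ℕ → ℝ → ℝ)
    (hcad : ∀ i : ℕ, CadlagOn T (ψ i)) (hcad' : ∀ i : ℕ, CadlagOn T (ψ' i))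
    (hψ0 : ∀ i : ℕ, ψ i 0 ≤ 1) (hψ0' : ∀ i : ℕ, ψ' i 0 ≤ 1)
    (φ η φ' η' : ℕ → ℝ → ℝ)
    (h : SolvesSPInf T ψ φ η) (h' : SolvesSPInf T ψ' φ' η') :
    wdist T η η' ≤ 2 * wdist T ψ ψ' ∧ wdist T φ φ' ≤ 4 * wdist T ψ ψ' :=
  skorokhod_inf_dim_lipschitz_general T ψ ψ' φ η φ' η' h h'
end

section
/- Let ℓ(x) = x·log x − x + 1 (with ℓ(0) = 1) and let c ≥ 0. For all real numbers a, b with a ≥ 0, b ≥ 0, and a − b = c, one has ℓ(a) + ℓ(b) ≥ ℓ((c + √(c² + 4))/2) + ℓ((−c + √(c² + 4))/2). That is, the infimum of ℓ(a) + ℓ(b) over a, b ≥ 0 with a − b = c is attained at a = (c + √(c² + 4))/2 and b = (−c + √(c² + 4))/2. -/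
/-- `ℓ(x) = x log x - x + 1`, with `ℓ(0) = 1` (since `Real.log 0 = 0`). -/
noncomputable def ell (x : ℝ) : ℝ := x * Real.log x - x + 1

/-- Tangent line bound for the convex function `ell`. -/
lemma ell_tangent {x x₀ : ℝ} (hx : 0 ≤ x) (hx₀ : 0 < x₀) :
    ell x₀ + Real.log x₀ * (x - x₀) ≤ ell x := by
  unfold ell
  rcases eq_or_lt_of_le hx with h | h
  · subst h
    simp only [Real.log_zero, mul_zero]
    nlinarith
  · have hlog := Real.log_le_sub_one_of_pos (show (0:ℝ) < x₀ / x by positivity)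
    rw [Real.log_div (ne_of_gt hx₀) (ne_of_gt h)] at hlog
    have h3 : x * (x₀ / x) = x₀ := by field_simp
    nlinarith [mul_le_mul_of_nonneg_left hlog (le_of_lt h)]

/-- For `c ≥ 0`, the infimum of `ℓ(a) + ℓ(b)` over `a, b ≥ 0` with `a - b = c` is attained
at `a = (c + √(c² + 4))/2`, `b = (-c + √(c² + 4))/2`. -/
theorem ell_add_ell_min (c : ℝ) (hc : 0 ≤ c) (a b : ℝ)
    (ha : 0 ≤ a) (hb : 0 ≤ b) (hab : a - b = c) :
    ell ((c + Real.sqrt (c ^ 2 + 4)) / 2) + ell ((-c + Real.sqrt (c ^ 2 + 4)) / 2) ≤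
      ell a + ell b := by
  set s := Real.sqrt (c ^ 2 + 4) with hs
  have hs2 : s ^ 2 = c ^ 2 + 4 := Real.sq_sqrt (by positivity)
  have hsnn : 0 ≤ s := Real.sqrt_nonneg _
  have hcs : c < s := by nlinarith
  set a₀ := (c + s) / 2 with ha₀
  set b₀ := (-c + s) / 2 with hb₀
  have ha₀pos : 0 < a₀ := by positivity
  have hb₀pos : 0 < b₀ := by
    have : 0 < -c + s := by linarith
    positivity
  have hprod : a₀ * b₀ = 1 := by
    rw [ha₀, hb₀]; nlinarith
  have hlogsum : Real.log a₀ + Real.log b₀ = 0 := by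
    rw [← Real.log_mul (ne_of_gt ha₀pos) (ne_of_gt hb₀pos), hprod, Real.log_one]
  have h1 := ell_tangent ha ha₀pos
  have h2 := ell_tangent hb hb₀pos
  have hdiff : a - a₀ = b - b₀ := by rw [ha₀, hb₀]; linarith
  have hzero : Real.log a₀ * (a - a₀) + Real.log b₀ * (b - b₀) = 0 := by
    rw [hdiff, ← add_mul, hlogsum, zero_mul]
  linarith
end

section
/- Let ℓ(x) = x·log x − x + 1 (with ℓ(0) = 1). Fix T > 0, an integer m ≥ 1, and positive real numbers θ_1, …, θ_m with Σ_{i=1}^{m} θ_i^{−1} = T. Set a = m/T. Then Σ_{i=1}^{m} θ_i^{−1} · [ ℓ((θ_i + √(θ_i² + 4))/2) + ℓ((−θ_i + √(θ_i² + 4))/2) ] ≥ T·ℓ((a + √(4 + a²))/2) + T·ℓ((−a + √(4 + a²))/2). -/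
open Real Set

lemma ell_exp_add_ell_exp_neg (y : ℝ) :
    ell (exp y) + ell (exp (-y)) = 2 * (y * sinh y - cosh y + 1) := by
  simp only [ell, log_exp, sinh_eq, cosh_eq]
  ring

lemma add_sqrt_sq_add_four_div_two (θ : ℝ) :
    (θ + √(θ ^ 2 + 4)) / 2 = exp (arsinh (θ / 2)) := by
  have hsqrt : √(θ ^ 2 + 4) = 2 * √(1 + (θ / 2) ^ 2) := by
    rw [show θ ^ 2 + 4 = 2 ^ 2 * (1 + (θ / 2) ^ 2) by ring, sqrt_mul' _ (by positivity),
      sqrt_sq zero_le_two]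
  rw [exp_arsinh, hsqrt]
  ring

lemma neg_add_sqrt_sq_add_four_div_two (θ : ℝ) :
    (-θ + √(θ ^ 2 + 4)) / 2 = exp (-arsinh (θ / 2)) := by
  rw [← arsinh_neg, ← neg_div, ← add_sqrt_sq_add_four_div_two, neg_sq]

noncomputable def pairCost (θ : ℝ) : ℝ :=
  ell ((θ + √(θ ^ 2 + 4)) / 2) + ell ((-θ + √(θ ^ 2 + 4)) / 2)

lemma pairCost_eq (θ : ℝ) :
    pairCost θ = θ * arsinh (θ / 2) - 2 * cosh (arsinh (θ / 2)) + 2 := by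
  rw [pairCost, add_sqrt_sq_add_four_div_two, neg_add_sqrt_sq_add_four_div_two,
    ell_exp_add_ell_exp_neg, sinh_arsinh]
  ring

lemma hasDerivAt_pairCost (θ : ℝ) : HasDerivAt pairCost (arsinh (θ / 2)) θ := by
  have hy : HasDerivAt (fun θ => arsinh (θ / 2)) ((√(1 + (θ / 2) ^ 2))⁻¹ * (1 / 2)) θ :=
    (hasDerivAt_arsinh _).comp θ ((hasDerivAt_id θ).div_const 2)
  have h := ((hasDerivAt_id θ).mul hy).sub (hy.cosh.const_mul 2) |>.add_const 2
  refine (h.congr_deriv ?_).congr_of_eventuallyEq (.of_forall pairCost_eq)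
  rw [sinh_arsinh]
  simp only [id]
  ring

lemma convexOn_pairCost : ConvexOn ℝ univ pairCost := by
  refine Monotone.convexOn_univ_of_deriv (fun θ => (hasDerivAt_pairCost θ).differentiableAt) ?_
  intro a b hab
  rw [(hasDerivAt_pairCost a).deriv, (hasDerivAt_pairCost b).deriv]
  exact arsinh_le_arsinh.2 (by linarith)

theorem cost_lower_bound_general (T : ℝ) (hT : 0 < T) (m : ℕ)
    (θ : Fin m → ℝ) (hθ : ∀ i, 0 < θ i) (hsum : ∑ i, (θ i)⁻¹ = T) :
    T * ell (((m : ℝ) / T + Real.sqrt (4 + ((m : ℝ) / T) ^ 2)) / 2) +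
      T * ell ((-((m : ℝ) / T) + Real.sqrt (4 + ((m : ℝ) / T) ^ 2)) / 2) ≤
    ∑ i, (θ i)⁻¹ *
      (ell ((θ i + Real.sqrt ((θ i) ^ 2 + 4)) / 2) +
        ell ((-(θ i) + Real.sqrt ((θ i) ^ 2 + 4)) / 2)) := by
  have hjensen := convexOn_pairCost.map_centerMass_le (t := Finset.univ) (p := θ)
    (fun i _ => (inv_pos.2 (hθ i)).le) (hsum ▸ hT) (fun i _ => mem_univ _)
  have hbarycentre : Finset.univ.centerMass (fun i => (θ i)⁻¹) θ = m / T := by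
    simp [Finset.centerMass, hsum, inv_mul_cancel₀ (hθ _).ne', div_eq_inv_mul]
  rw [hbarycentre, Finset.centerMass, hsum, le_inv_smul_iff_of_pos hT] at hjensen
  rw [add_comm 4, ← mul_add]
  simpa [pairCost] using hjensen

/-- Key deterministic inequality from the proof of Theorem 2.6: for `θ_1, …, θ_m > 0` with
`∑ θ_i⁻¹ = T` and `a = m / T`,
`∑ θ_i⁻¹ [ℓ((θ_i + √(θ_i² + 4))/2) + ℓ((-θ_i + √(θ_i² + 4))/2)]`
`≥ T ℓ((a + √(4 + a²))/2) + T ℓ((-a + √(4 + a²))/2)`. -/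
theorem cost_lower_bound (T : ℝ) (hT : 0 < T) (m : ℕ) (hm : 1 ≤ m)
    (θ : Fin m → ℝ) (hθ : ∀ i, 0 < θ i) (hsum : ∑ i, (θ i)⁻¹ = T) :
    T * ell (((m : ℝ) / T + Real.sqrt (4 + ((m : ℝ) / T) ^ 2)) / 2) +
      T * ell ((-((m : ℝ) / T) + Real.sqrt (4 + ((m : ℝ) / T) ^ 2)) / 2) ≤
    ∑ i, (θ i)⁻¹ *
      (ell ((θ i + Real.sqrt ((θ i) ^ 2 + 4)) / 2) +
        ell ((-(θ i) + Real.sqrt ((θ i) ^ 2 + 4)) / 2)) :=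
  cost_lower_bound_general T hT m θ hθ hsum
end

section
/- Fix T > 0, a real number f₀, and an integrable function g : [0,T] → ℝ. Define f(t) = f₀ + ∫₀ᵗ g(s) ds and F(t) = sup_{0 ≤ u ≤ t} f(u) for t ∈ [0,T]. Then F is nondecreasing and for every t ∈ [0,T], F(t) = f₀ + ∫₀ᵗ g(s)·1{f(s) = F(s)} ds. -/
/-!
The running maximum `F` of `f = f₀ + ∫₀ᵗ g` inherits the modulus `|f y - f x| ≤ |∫ₓʸ |g||`,
so it is absolutely continuous and `F t - F 0 = ∫₀ᵗ F'`. At almost every point of `(0, T)` both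
`f` and `F` are differentiable, with `f' = g`. Where `f < F`, the maximum is attained strictly
earlier and `F` is locally constant; where `f = F`, the function `F - f ≥ 0` has an interior
minimum, so `F' = f'`. Hence `F' = g · 1{f = F}` almost everywhere.
-/

open MeasureTheory Set intervalIntegral Filter Topology

theorem AbsolutelyContinuousOnInterval.of_dist_le {X Y : Type*} [PseudoMetricSpace X]
    [PseudoMetricSpace Y] {φ : ℝ → X} {ψ : ℝ → Y} {a b : ℝ}
    (hψ : AbsolutelyContinuousOnInterval ψ a b)
    (h : ∀ x ∈ uIcc a b, ∀ y ∈ uIcc a b, dist (φ x) (φ y) ≤ dist (ψ x) (ψ y)) :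
    AbsolutelyContinuousOnInterval φ a b := by
  refine squeeze_zero' (Eventually.of_forall fun _ ↦ Finset.sum_nonneg fun _ _ ↦ dist_nonneg)
    ?_ hψ
  filter_upwards [mem_inf_of_right (mem_principal_self _)] with E hE
  exact Finset.sum_le_sum fun i hi ↦ h _ (hE.1 i hi).1 _ (hE.1 i hi).2

theorem HasDerivAt.eq_of_eventuallyLE_of_eq {φ ψ : ℝ → ℝ} {φ' ψ' x : ℝ}
    (hφ : HasDerivAt φ φ' x) (hψ : HasDerivAt ψ ψ' x) (hle : φ ≤ᶠ[𝓝 x] ψ)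
    (heq : φ x = ψ x) :
    φ' = ψ' := by
  have hmin : IsLocalMin (ψ - φ) x := by
    filter_upwards [hle] with y hy
    simp only [Pi.sub_apply, heq, sub_self, sub_nonneg, hy]
  linarith [hmin.hasDerivAt_eq_zero (hψ.sub hφ)]

noncomputable def runningMax (f : ℝ → ℝ) (t : ℝ) : ℝ := sSup (f '' Icc 0 t)

section runningMax

variable {f : ℝ → ℝ} {T : ℝ}

theorem runningMax_zero (f : ℝ → ℝ) : runningMax f 0 = f 0 := by
  simp [runningMax]

theorem le_runningMax (hf : ContinuousOn f (Icc 0 T)) {t u : ℝ} (ht : t ≤ T)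
    (hu : u ∈ Icc 0 t) : f u ≤ runningMax f t :=
  le_csSup ((isCompact_Icc.image_of_continuousOn (hf.mono (Icc_subset_Icc_right ht))).bddAbove)
    (mem_image_of_mem f hu)

theorem runningMax_le {t c : ℝ} (ht : 0 ≤ t) (h : ∀ u ∈ Icc 0 t, f u ≤ c) :
    runningMax f t ≤ c :=
  csSup_le ((nonempty_Icc.2 ht).image f) (forall_mem_image.2 h)

theorem le_runningMax_self (hf : ContinuousOn f (Icc 0 T)) {t : ℝ} (ht : t ∈ Icc 0 T) :
    f t ≤ runningMax f t :=
  le_runningMax hf ht.2 ⟨ht.1, le_rfl⟩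

theorem monotoneOn_runningMax (hf : ContinuousOn f (Icc 0 T)) :
    MonotoneOn (runningMax f) (Icc 0 T) := fun _ hx _ hy hxy ↦
  runningMax_le hx.1 fun _ hu ↦ le_runningMax hf hy.2 ⟨hu.1, hu.2.trans hxy⟩

theorem exists_eq_runningMax (hf : ContinuousOn f (Icc 0 T)) {t : ℝ} (ht : t ∈ Icc 0 T) :
    ∃ p ∈ Icc 0 t, f p = runningMax f t := by
  obtain ⟨p, hp, hmax, -⟩ := isCompact_Icc.exists_sSup_image_eq_and_ge (nonempty_Icc.2 ht.1)
    (hf.mono (Icc_subset_Icc_right ht.2))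
  exact ⟨p, hp, hmax.symm⟩

theorem dist_runningMax_le (hf : ContinuousOn f (Icc 0 T)) {H : ℝ → ℝ}
    (hH : MonotoneOn H (Icc 0 T))
    (hfH : ∀ x ∈ Icc 0 T, ∀ y ∈ Icc 0 T, dist (f x) (f y) ≤ dist (H x) (H y))
    {x y : ℝ} (hx : x ∈ Icc 0 T) (hy : y ∈ Icc 0 T) :
    dist (runningMax f x) (runningMax f y) ≤ dist (H x) (H y) := by
  wlog hxy : x ≤ y generalizing x y
  · rw [dist_comm, dist_comm (H x)]
    exact this hy hx (le_of_not_ge hxy)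
  have hFy : runningMax f y ≤ runningMax f x + (H y - H x) := by
    refine runningMax_le hy.1 fun u hu ↦ ?_
    have hHxy := hH hx hy hxy
    rcases le_total u x with hux | hxu
    · linarith [le_runningMax hf hx.2 ⟨hu.1, hux⟩]
    · have huT : u ∈ Icc 0 T := ⟨hu.1, hu.2.trans hy.2⟩
      have hfu := (le_abs_self _).trans (Real.dist_eq _ _ ▸ hfH u huT x hx)
      rw [Real.dist_eq, abs_of_nonneg (sub_nonneg.2 (hH hx huT hxu))] at hfu
      linarith [le_runningMax_self hf hx, hH huT hy hu.2]
  have hFxy := monotoneOn_runningMax hf hx hy hxy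
  rw [dist_comm, dist_comm (H x), Real.dist_eq, Real.dist_eq, abs_of_nonneg (by linarith),
    abs_of_nonneg (by linarith)]
  linarith

theorem runningMax_eventuallyEq (hf : ContinuousOn f (Icc 0 T)) {x : ℝ} (hx : x ∈ Ioo 0 T)
    (hlt : f x < runningMax f x) : runningMax f =ᶠ[𝓝 x] fun _ ↦ runningMax f x := by
  obtain ⟨p, hp, hfp⟩ := exists_eq_runningMax hf (Ioo_subset_Icc_self hx)
  have hpx : p < x := hp.2.lt_of_ne (by rintro rfl; exact hlt.ne hfp)
  have hnhds : {u | f u < runningMax f x} ∈ 𝓝 x :=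
    (hf.continuousAt (Icc_mem_nhds hx.1 hx.2)).eventually (gt_mem_nhds hlt)
  obtain ⟨l, r, hlr, hsub⟩ := mem_nhds_iff_exists_Ioo_subset.1 hnhds
  filter_upwards [Ioo_mem_nhds (max_lt hpx hlr.1) (lt_min hx.2 hlr.2)] with y hy
  have hy0 : 0 ≤ y := hp.1.trans (le_max_left _ _ |>.trans hy.1.le)
  refine le_antisymm (runningMax_le hy0 fun u hu ↦ ?_) ?_
  · rcases le_total u x with hux | hxu
    · exact le_runningMax hf hx.2.le ⟨hu.1, hux⟩
    · exact (hsub ⟨hlr.1.trans_le hxu, hu.2.trans_lt (hy.2.trans_le (min_le_right _ _))⟩).le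
  · rw [← hfp]
    exact le_runningMax hf (hy.2.le.trans (min_le_left _ _))
      ⟨hp.1, (le_max_left _ _).trans hy.1.le⟩

theorem ae_hasDerivAt_runningMax (hf : ContinuousOn f (Icc 0 T)) {f' : ℝ → ℝ}
    (hf' : ∀ᵐ x, x ∈ Ioo 0 T → HasDerivAt f (f' x) x) :
    ∀ᵐ x, x ∈ Ioo 0 T →
      HasDerivAt (runningMax f) ({s | f s = runningMax f s}.indicator f' x) x := by
  filter_upwards [hf', (monotoneOn_runningMax hf).ae_differentiableWithinAt_of_mem]
    with x hfx hFx hx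
  have hIcc : Icc 0 T ∈ 𝓝 x := Icc_mem_nhds hx.1 hx.2
  rcases (le_runningMax_self hf (Ioo_subset_Icc_self hx)).eq_or_lt with heq | hlt
  · have hF := ((hFx (Ioo_subset_Icc_self hx)).differentiableAt hIcc).hasDerivAt
    have hle : f ≤ᶠ[𝓝 x] runningMax f :=
      eventually_of_mem hIcc fun _ hy ↦ le_runningMax_self hf hy
    rw [indicator_of_mem (show x ∈ {s | f s = runningMax f s} from heq),
      (hfx hx).eq_of_eventuallyLE_of_eq hF hle heq]
    exact hF
  · rw [indicator_of_notMem (show x ∉ {s | f s = runningMax f s} from hlt.ne)]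
    exact (hasDerivAt_const x _).congr_of_eventuallyEq (runningMax_eventuallyEq hf hx hlt)

end runningMax

section primitive

variable {f g : ℝ → ℝ} {c T : ℝ}

theorem continuousOn_of_eq_const_add_integral (hg : IntegrableOn g (Icc 0 T))
    (hf : ∀ t, f t = c + ∫ s in 0..t, g s) : ContinuousOn f (Icc 0 T) :=
  ((continuousOn_primitive hg).const_add c).congr fun t ht ↦ by rw [hf, integral_of_le ht.1]

theorem absolutelyContinuousOnInterval_runningMax_of_eq_const_add_integral (hT : 0 ≤ T)
    (hg : IntegrableOn g (Icc 0 T)) (hf : ∀ t, f t = c + ∫ s in 0..t, g s) :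
    AbsolutelyContinuousOnInterval (runningMax f) 0 T := by
  set H := fun t ↦ ∫ s in 0..t, ‖g s‖
  have hint : ∀ x ∈ Icc 0 T, IntervalIntegrable g volume 0 x := fun x hx ↦
    (intervalIntegrable_iff_integrableOn_Icc_of_le hx.1).2
      (hg.mono_set (Icc_subset_Icc_right hx.2))
  have hfH : ∀ x ∈ Icc 0 T, ∀ y ∈ Icc 0 T, dist (f x) (f y) ≤ dist (H x) (H y) := by
    intro x hx y hy
    rw [hf, hf, dist_add_left, dist_eq_norm, dist_eq_norm,
      integral_interval_sub_left (hint x hx) (hint y hy),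
      integral_interval_sub_left (hint x hx).norm (hint y hy).norm]
    exact norm_integral_le_abs_integral_norm
  have hH : MonotoneOn H (Icc 0 T) := fun x hx y hy hxy ↦
    integral_mono_interval le_rfl hx.1 hxy (Eventually.of_forall fun _ ↦ norm_nonneg _)
      (hint y hy).norm
  have hHac : AbsolutelyContinuousOnInterval H 0 T :=
    (hint T ⟨hT, le_rfl⟩).norm.absolutelyContinuousOnInterval_intervalIntegral left_mem_uIcc
  refine hHac.of_dist_le fun x hx y hy ↦ ?_
  rw [uIcc_of_le hT] at hx hy
  exact dist_runningMax_le (continuousOn_of_eq_const_add_integral hg hf) hH hfH hx hy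

theorem ae_hasDerivAt_of_eq_const_add_integral (hT : 0 ≤ T)
    (hg : IntegrableOn g (Icc 0 T)) (hf : ∀ t, f t = c + ∫ s in 0..t, g s) :
    ∀ᵐ x, x ∈ Ioo 0 T → HasDerivAt f (g x) x := by
  have hg' := (intervalIntegrable_iff_integrableOn_Icc_of_le hT).2 hg
  filter_upwards [hg'.ae_hasDerivAt_integral] with x hx hxT
  have hxT' : x ∈ uIcc 0 T := by rw [uIcc_of_le hT]; exact Ioo_subset_Icc_self hxT
  simpa only [← hf] using (hx hxT' 0 left_mem_uIcc).const_add c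

end primitive

theorem running_max_integral_general (T : ℝ) (f₀ : ℝ) (g : ℝ → ℝ)
    (hg : IntegrableOn g (Icc 0 T))
    (f F : ℝ → ℝ)
    (hf : ∀ t : ℝ, f t = f₀ + ∫ s in (0 : ℝ)..t, g s)
    (hF : ∀ t : ℝ, F t = sSup (f '' Icc 0 t)) :
    MonotoneOn F (Icc 0 T) ∧
    ∀ t ∈ Icc (0 : ℝ) T,
      F t = f₀ + ∫ s in (0 : ℝ)..t, Set.indicator {s : ℝ | f s = F s} g s := by
  obtain rfl : F = runningMax f := funext hF
  refine ⟨monotoneOn_runningMax (continuousOn_of_eq_const_add_integral hg hf), fun t ht ↦ ?_⟩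
  have hgt : IntegrableOn g (Icc 0 t) := hg.mono_set (Icc_subset_Icc_right ht.2)
  have hderiv := ae_hasDerivAt_runningMax (continuousOn_of_eq_const_add_integral hgt hf)
    (ae_hasDerivAt_of_eq_const_add_integral ht.1 hgt hf)
  have hF0 : runningMax f 0 = f₀ := by rw [runningMax_zero, hf, integral_same, add_zero]
  have hint : ∫ s in 0..t, deriv (runningMax f) s
      = ∫ s in 0..t, {s | f s = runningMax f s}.indicator g s := by
    refine integral_congr_ae ?_
    filter_upwards [hderiv, Measure.ae_ne volume t] with x hx hxt hmem
    rw [uIoc_of_le ht.1] at hmem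
    exact (hx ⟨hmem.1, hmem.2.lt_of_ne hxt⟩).deriv
  rw [← hint, (absolutelyContinuousOnInterval_runningMax_of_eq_const_add_integral ht.1 hgt
    hf).integral_deriv_eq_sub, hF0]
  ring

/-- Running-maximum identity: if `f(t) = f₀ + ∫₀ᵗ g(s) ds` with `g` integrable on `[0,T]`,
and `F(t) = sup_{0 ≤ u ≤ t} f(u)`, then `F` is nondecreasing on `[0,T]` and
`F(t) = f₀ + ∫₀ᵗ g(s) · 1{f(s) = F(s)} ds` for every `t ∈ [0,T]`. -/
theorem running_max_integral (T : ℝ) (hT : 0 < T) (f₀ : ℝ) (g : ℝ → ℝ)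
    (hg : IntegrableOn g (Icc 0 T))
    (f F : ℝ → ℝ)
    (hf : ∀ t : ℝ, f t = f₀ + ∫ s in (0 : ℝ)..t, g s)
    (hF : ∀ t : ℝ, F t = sSup (f '' Icc 0 t)) :
    MonotoneOn F (Icc 0 T) ∧
    ∀ t ∈ Icc (0 : ℝ) T,
      F t = f₀ + ∫ s in (0 : ℝ)..t, Set.indicator {s : ℝ | f s = F s} g s :=
  running_max_integral_general T f₀ g hg f F hf hF
end
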